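/- Let X be a finite co-tree in which some point x has at least three distinct immediate predecessors z₁, z₂, z₃. Then the map f : X → F₃ sending ↑x to a, ↓z₁ to b, ↓z₂ to c, and all remaining points to d is a surjective bi-p-morphism onto F₃, the poset with top a and three pairwise incomparable minimal elements b, c, d below a. -/

import Mathlib

/-!
In a co-tree, a point `v` above some `u ≤ zᵢ` (with `zᵢ ⋖ x`) is comparable with `zᵢ`, and if it
lies above `zᵢ` it is comparable with `x`; so `v ∈ ↓zᵢ ∪ ↑x`. Hence the only way to leave a block
of the partition `↑x, ↓z₁, ↓z₂, rest` upwards is into `↑x`, which is monotonicity. The up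
condition is witnessed by `⊤`; for the down condition, every point labelled `a` lies above `x`,
and `x, z₁, z₂, z₃ ≤ x` carry all four labels.
-/

/-- The co-tree `F₃`: a top element `a` with three pairwise incomparable minimal
immediate predecessors `b`, `c`, `d`. -/
inductive F3 where
  | a | b | c | d
deriving DecidableEq

instance instFintypeF3 : Fintype F3 :=
  ⟨{F3.a, F3.b, F3.c, F3.d}, by intro x; cases x <;> simp⟩

def F3.leb : F3 → F3 → Bool
  | _, .a => true
  | x, y => decide (x = y)

instance : PartialOrder F3 where
  le x y := F3.leb x y = true
  le_refl u := by
    show F3.leb u u = true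
    cases u <;> decide
  le_trans u v w := by
    show F3.leb u v = true → F3.leb v w = true → F3.leb u w = true
    cases u <;> cases v <;> cases w <;> decide
  le_antisymm u v := by
    show F3.leb u v = true → F3.leb v u = true → u = v
    cases u <;> cases v <;> decide

namespace F3

theorem le_iff {p q : F3} : p ≤ q ↔ p = q ∨ q = a := by
  change leb p q = true ↔ _
  cases p <;> cases q <;> simp [leb]

variable {X : Type*} [Preorder X] {f : X → F3}

theorem exists_ge_map_eq_of_map_le [OrderTop X] (htop : f ⊤ = a) {u : X} {y : F3}
    (hy : f u ≤ y) : ∃ z, u ≤ z ∧ f z = y := by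
  rcases le_iff.1 hy with rfl | rfl
  exacts [⟨u, le_rfl, rfl⟩, ⟨⊤, le_top, htop⟩]

theorem exists_le_map_eq_of_le_map {x : X} (hx : ∀ y, ∃ z ≤ x, f z = y)
    (habove : ∀ u, f u = a → x ≤ u) {u : X} {y : F3} (hy : y ≤ f u) :
    ∃ z, z ≤ u ∧ f z = y := by
  rcases le_iff.1 hy with rfl | hu
  · exact ⟨u, le_rfl, rfl⟩
  · obtain ⟨z, hzx, rfl⟩ := hx y
    exact ⟨z, hzx.trans (habove u hu), rfl⟩

end F3

theorem CovBy.not_le_of_covBy_of_ne {X : Type*} [PartialOrder X] {a b c : X} (ha : a ⋖ c)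
    (hb : b ⋖ c) (hab : a ≠ b) : ¬ a ≤ b := fun h =>
  (ha.eq_or_eq h hb.le).elim (fun e => hab e.symm) hb.ne

section Cotree

variable {X : Type*} [PartialOrder X]

theorem le_or_le_of_le_of_covBy (hchain : ∀ x : X, IsChain (· ≤ ·) (Set.Ici x)) {u v z x : X}
    (hz : z ⋖ x) (hu : u ≤ z) (huv : u ≤ v) : v ≤ z ∨ x ≤ v := by
  rcases (hchain u).total hu huv with hzv | hvz
  · rcases (hchain z).total hzv hz.le with hvx | hxv
    · exact (hz.eq_or_eq hzv hvx).imp le_of_eq ge_of_eq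
    · exact Or.inr hxv
  · exact Or.inl hvz

theorem monotone_of_cotree_labelling (hchain : ∀ x : X, IsChain (· ≤ ·) (Set.Ici x))
    {x z1 z2 : X} (hz1 : z1 ⋖ x) (hz2 : z2 ⋖ x) {f : X → F3}
    (hfa : ∀ w, x ≤ w → f w = F3.a)
    (hfb : ∀ w, w ≤ z1 → f w = F3.b)
    (hfc : ∀ w, w ≤ z2 → f w = F3.c)
    (hfd : ∀ w, ¬ x ≤ w → ¬ w ≤ z1 → ¬ w ≤ z2 → f w = F3.d) :
    Monotone f := by
  intro u v huv
  rw [F3.le_iff]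
  by_cases hxv : x ≤ v
  · exact Or.inr (hfa v hxv)
  left
  by_cases hu1 : u ≤ z1
  · have hv1 := (le_or_le_of_le_of_covBy hchain hz1 hu1 huv).resolve_right hxv
    rw [hfb u hu1, hfb v hv1]
  by_cases hu2 : u ≤ z2
  · have hv2 := (le_or_le_of_le_of_covBy hchain hz2 hu2 huv).resolve_right hxv
    rw [hfc u hu2, hfc v hv2]
  rw [hfd u (fun h => hxv (h.trans huv)) hu1 hu2,
    hfd v hxv (fun h => hu1 (huv.trans h)) (fun h => hu2 (huv.trans h))]

end Cotree

theorem le_of_cotree_labelling_eq_a {X : Type*} [Preorder X] {x z1 z2 : X} {f : X → F3}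
    (hfb : ∀ w, w ≤ z1 → f w = F3.b)
    (hfc : ∀ w, w ≤ z2 → f w = F3.c)
    (hfd : ∀ w, ¬ x ≤ w → ¬ w ≤ z1 → ¬ w ≤ z2 → f w = F3.d) (u : X) (hu : f u = F3.a) :
    x ≤ u := by
  by_contra hxu
  by_cases hu1 : u ≤ z1
  · simp [hfb u hu1] at hu
  by_cases hu2 : u ≤ z2
  · simp [hfc u hu2] at hu
  simp [hfd u hxu hu1 hu2] at hu

theorem cotree_three_preds_biPMorphism_to_F3_general {X : Type*} [PartialOrder X] [OrderTop X]
    (hchain : ∀ x : X, IsChain (· ≤ ·) (Set.Ici x))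
    (x z1 z2 z3 : X) (h13 : z1 ≠ z3) (h23 : z2 ≠ z3)
    (hz1 : z1 ⋖ x) (hz2 : z2 ⋖ x) (hz3 : z3 ⋖ x)
    (f : X → F3)
    (hfa : ∀ w, x ≤ w → f w = F3.a)
    (hfb : ∀ w, w ≤ z1 → f w = F3.b)
    (hfc : ∀ w, w ≤ z2 → f w = F3.c)
    (hfd : ∀ w, ¬ x ≤ w → ¬ w ≤ z1 → ¬ w ≤ z2 → f w = F3.d) :
    Monotone f ∧
      (∀ (u : X) (y : F3), f u ≤ y → ∃ z, u ≤ z ∧ f z = y) ∧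
      (∀ (u : X) (y : F3), y ≤ f u → ∃ z, z ≤ u ∧ f z = y) ∧
      Function.Surjective f := by
  have hdown : ∀ y, ∃ z ≤ x, f z = y
    | .a => ⟨x, le_rfl, hfa x le_rfl⟩
    | .b => ⟨z1, hz1.le, hfb z1 le_rfl⟩
    | .c => ⟨z2, hz2.le, hfc z2 le_rfl⟩
    | .d => ⟨z3, hz3.le, hfd z3 hz3.lt.not_ge (hz3.not_le_of_covBy_of_ne hz1 h13.symm)
        (hz3.not_le_of_covBy_of_ne hz2 h23.symm)⟩
  refine ⟨monotone_of_cotree_labelling hchain hz1 hz2 hfa hfb hfc hfd,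
    fun _ _ => F3.exists_ge_map_eq_of_map_le (hfa ⊤ le_top),
    fun _ _ => F3.exists_le_map_eq_of_le_map hdown (le_of_cotree_labelling_eq_a hfb hfc hfd),
    fun y => (hdown y).imp fun _ => And.right⟩

/-- If in a finite co-tree a point `x` has three distinct immediate predecessors
`z₁, z₂, z₃`, then the map sending `↑x` to `a`, `↓z₁` to `b`, `↓z₂` to `c`, and all
remaining points to `d` is a surjective bi-p-morphism onto `F₃`. -/
theorem cotree_three_preds_biPMorphism_to_F3 {X : Type*} [PartialOrder X] [OrderTop X]
    [Fintype X] (hchain : ∀ x : X, IsChain (· ≤ ·) (Set.Ici x))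
    (x z1 z2 z3 : X) (h12 : z1 ≠ z2) (h13 : z1 ≠ z3) (h23 : z2 ≠ z3)
    (hz1 : z1 ⋖ x) (hz2 : z2 ⋖ x) (hz3 : z3 ⋖ x)
    (f : X → F3)
    (hfa : ∀ w, x ≤ w → f w = F3.a)
    (hfb : ∀ w, w ≤ z1 → f w = F3.b)
    (hfc : ∀ w, w ≤ z2 → f w = F3.c)
    (hfd : ∀ w, ¬ x ≤ w → ¬ w ≤ z1 → ¬ w ≤ z2 → f w = F3.d) :
    Monotone f ∧
      (∀ (u : X) (y : F3), f u ≤ y → ∃ z, u ≤ z ∧ f z = y) ∧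
      (∀ (u : X) (y : F3), y ≤ f u → ∃ z, z ≤ u ∧ f z = y) ∧
      Function.Surjective f :=
  cotree_three_preds_biPMorphism_to_F3_general hchain x z1 z2 z3 h13 h23 hz1 hz2 hz3 f hfa hfb hfc
    hfd
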